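/- Let s be a string over Γ ∪ {□} and x a non-blank index of s that is not the greatest non-blank index. Define the truncated successor on d(s) by S(i) = i + 1 if i + 1 < |d(s)|, else S(i) = i. Then S(x*) = (x+1)^S; that is, the successor of x* in d(s) equals y*, where y is the least non-blank index of s that is ≥ x + 1. -/
import Mathlib


/-- Strings over `Γ ∪ {□}` are lists of `Option Γ`, with `none` as the blank `□`.
`del` deletes all blanks. -/
def del {Γ : Type} (s : List (Option Γ)) : List Γ := s.reduceOption

/-- Index `x` of `s` is non-blank: it is a valid index carrying a non-blank character. -/
def NonBlank {Γ : Type} (s : List (Option Γ)) (x : ℕ) : Prop :=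
  x < s.length ∧ s[x]? ≠ some none

/-- `star s x` = `x` minus the number of blank indices of `s` strictly below `x`
(equivalently, the number of non-blank indices below `x`). -/
def star {Γ : Type} (s : List (Option Γ)) (x : ℕ) : ℕ :=
  ((s.take x).reduceOption).length

/-- `y` is the least non-blank index of `s` that is `≥ x` (so `x^S = star s y`). -/
def LeastNB {Γ : Type} (s : List (Option Γ)) (x y : ℕ) : Prop :=
  NonBlank s y ∧ x ≤ y ∧ ∀ w, x ≤ w → NonBlank s w → y ≤ w

/-- `z` is the greatest non-blank index of `s` that is `≤ x` (so `x^P = star s z`). -/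
def GreatestNB {Γ : Type} (s : List (Option Γ)) (x z : ℕ) : Prop :=
  NonBlank s z ∧ z ≤ x ∧ ∀ w, w ≤ x → NonBlank s w → w ≤ z

lemma star_succ {Γ : Type} (s : List (Option Γ)) (x : ℕ) :
    star s (x+1) = star s x + (s[x]?.toList).reduceOption.length := by
  unfold _root_.star
  rw [List.take_succ, List.reduceOption_append, List.length_append]

lemma star_succ_nonblank {Γ : Type} (s : List (Option Γ)) (x : ℕ)
    (h1 : x < s.length) (h2 : s[x]? ≠ some none) :
    star s (x+1) = star s x + 1 := by
  rw [star_succ]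
  have hv : s[x]? = some s[x] := List.getElem?_eq_getElem h1
  rcases hg : s[x] with _ | a
  · exact absurd (hg ▸ hv) h2
  · rw [hv, hg]; simp

lemma star_succ_blank {Γ : Type} (s : List (Option Γ)) (x : ℕ)
    (h : s[x]? = some none) : star s (x+1) = star s x := by
  rw [star_succ]; simp [h]

lemma star_const {Γ : Type} (s : List (Option Γ)) :
    ∀ n a, (∀ w, a ≤ w → w < a + n → s[w]? = some none) → star s (a + n) = star s a := by
  intro n
  induction n with
  | zero => intro a _; rfl
  | succ n ih =>
    intro a h
    have : a + (n+1) = (a + n) + 1 := by omega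
    rw [this, star_succ_blank s _ (h _ (by omega) (by omega)), ih a]
    intro w hw hw'; exact h w hw (by omega)

theorem stmt_12 {Γ : Type} (s : List (Option Γ)) (x : ℕ)
    (hx : NonBlank s x) (hnotmax : ∃ w, NonBlank s w ∧ x < w) :
    ∀ y, LeastNB s (x + 1) y → star s x + 1 = star s y := by
  rintro y ⟨⟨hylt, hynb⟩, hxy, hleast⟩
  have h1 : star s (x+1) = star s x + 1 := star_succ_nonblank s x hx.1 hx.2
  have h2 : star s y = star s (x+1) := by
    have : y = (x+1) + (y - (x+1)) := by omega
    rw [this]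
    apply star_const
    intro w hw hw'
    have hwlt : w < s.length := by omega
    by_contra hc
    have : y ≤ w := hleast w hw ⟨hwlt, hc⟩
    omega
  omega
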